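/- arXiv:1808.01767 — 2 statements merged into one kernel-verified Lean document; each statement's English description precedes it below -/
import Mathlib

section
/- Let (G,X,H) be an uncolorable degree-feasible configuration. Then for each non-separating vertex z of G, each vertex v ≠ z, and each color x ∈ X_z, it holds |N_H(x) ∩ X_v| = μ_G(v,z). -/
open Finset

noncomputable section
open scoped Classical

structure HGraph (α : Type) where
  verts : Finset α
  edges : Finset ℕ
  inc : ℕ → Finset α
  inc_sub : ∀ e ∈ edges, inc e ⊆ verts
  inc_card : ∀ e ∈ edges, 2 ≤ (inc e).card

variable {α β : Type} [DecidableEq α] [DecidableEq β]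

namespace HGraph

def degree (G : HGraph α) (v : α) : ℕ :=
  (G.edges.filter (fun e => v ∈ G.inc e)).card

def maxDegree (G : HGraph α) : ℕ := G.verts.sup G.degree

def mult (G : HGraph α) (u v : α) : ℕ :=
  (G.edges.filter (fun e => G.inc e = {u, v})).card

def Adj (G : HGraph α) (u v : α) : Prop :=
  u ≠ v ∧ ∃ e ∈ G.edges, u ∈ G.inc e ∧ v ∈ G.inc e

def Connected (G : HGraph α) : Prop :=
  ∀ u ∈ G.verts, ∀ v ∈ G.verts, Relation.ReflTransGen G.Adj u v

def IndepSet (H : HGraph β) (S : Finset β) : Prop :=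
  ∀ e ∈ H.edges, ¬ H.inc e ⊆ S

def eraseEdge (H : HGraph β) (e₀ : ℕ) : HGraph β where
  verts := H.verts
  edges := H.edges.erase e₀
  inc := H.inc
  inc_sub := fun e he => H.inc_sub e (Finset.mem_of_mem_erase he)
  inc_card := fun e he => H.inc_card e (Finset.mem_of_mem_erase he)

def induce (G : HGraph α) (S : Finset α) : HGraph α where
  verts := S
  edges := G.edges.filter (fun e => G.inc e ⊆ S)
  inc := G.inc
  inc_sub := fun e he => (Finset.mem_filter.mp he).2
  inc_card := fun e he => G.inc_card e (Finset.mem_filter.mp he).1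

def IsSub (G' G : HGraph α) : Prop :=
  G'.verts ⊆ G.verts ∧ G'.edges ⊆ G.edges ∧ ∀ e ∈ G'.edges, G'.inc e = G.inc e

def shrink (G : HGraph α) (v : α) : HGraph α where
  verts := G.verts.erase v
  edges := G.edges.filter (fun e => 2 ≤ ((G.inc e).erase v).card)
  inc := fun e => (G.inc e).erase v
  inc_sub := by
    intro e he y hy
    rw [Finset.mem_erase] at hy ⊢
    exact ⟨hy.1, G.inc_sub e (Finset.mem_filter.mp he).1 hy.2⟩
  inc_card := fun e he => (Finset.mem_filter.mp he).2

def nbhd (H : HGraph β) (x : β) : Finset β :=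
  H.verts.filter (fun y => ∃ e ∈ H.edges, H.inc e = {x, y})

def numComponents (G : HGraph α) : ℕ :=
  (G.verts.image (fun v => G.verts.filter (fun u => Relation.ReflTransGen G.Adj v u))).card

def IsBridge (G : HGraph α) (e : ℕ) : Prop :=
  numComponents (G.eraseEdge e) = numComponents G + ((G.inc e).card - 1)

def IsSepVertex (G : HGraph α) (v : α) : Prop :=
  ∃ A B : Finset α, A ∪ B = G.verts ∧ A ∩ B = {v} ∧ 2 ≤ A.card ∧ 2 ≤ B.card ∧
    ∀ e ∈ G.edges, G.inc e ⊆ A ∨ G.inc e ⊆ B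

def IsBlock (G : HGraph α) (S : Finset α) : Prop :=
  S ⊆ G.verts ∧ (G.induce S).Connected ∧ (∀ v, ¬ IsSepVertex (G.induce S) v) ∧
    ∀ S' : Finset α, S ⊆ S' → S' ⊆ G.verts → (G.induce S').Connected →
      (∀ v, ¬ IsSepVertex (G.induce S') v) → S' = S

end HGraph

open HGraph

def IsCover (G : HGraph α) (X : α → Finset β) (H : HGraph β) : Prop :=
  (∀ u ∈ G.verts, ∀ v ∈ G.verts, u ≠ v → Disjoint (X u) (X v)) ∧
  H.verts = G.verts.biUnion X ∧
  (∀ v ∈ G.verts, H.IndepSet (X v)) ∧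
  ∃ M : ℕ → Finset ℕ,
    (∀ e ∈ G.edges,
      M e ⊆ H.edges ∧
      (∀ e' ∈ M e, (∀ v ∈ G.inc e, (H.inc e' ∩ X v).card = 1) ∧
        H.inc e' ⊆ (G.inc e).biUnion X) ∧
      ∀ e₁ ∈ M e, ∀ e₂ ∈ M e, e₁ ≠ e₂ → Disjoint (H.inc e₁) (H.inc e₂)) ∧
    H.edges = G.edges.biUnion M

def HasIT (H : HGraph β) (Vs : Finset α) (X : α → Finset β) : Prop :=
  ∃ T : Finset β, H.IndepSet T ∧ ∀ v ∈ Vs, (T ∩ X v).card = 1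

def MinUncol (H : HGraph β) (Vs : Finset α) (X : α → Finset β) : Prop :=
  ¬ HasIT H Vs X ∧ ∀ e ∈ H.edges, HasIT (H.eraseEdge e) Vs X

def DPColorableAt (G : HGraph α) (k : ℕ) : Prop :=
  ∀ (X : α → Finset ℕ) (H : HGraph ℕ),
    IsCover G X H → (∀ v ∈ G.verts, k ≤ (X v).card) → HasIT H G.verts X

def chiDP (G : HGraph α) : ℕ := sInf {k | DPColorableAt G k}

def DPDegreeColorable (G : HGraph α) : Prop :=
  ∀ (X : α → Finset ℕ) (H : HGraph ℕ),
    IsCover G X H → (∀ v ∈ G.verts, G.degree v ≤ (X v).card) → HasIT H G.verts X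

def colNum (G : HGraph α) : ℕ :=
  sInf {k | ∀ G' : HGraph α, G'.IsSub G → G'.verts.Nonempty →
    ∃ v ∈ G'.verts, G'.degree v ≤ k}

def ProperColoring (G : HGraph α) (φ : α → ℕ) : Prop :=
  ∀ e ∈ G.edges, ∃ u ∈ G.inc e, ∃ v ∈ G.inc e, φ u ≠ φ v

def LColorable (G : HGraph α) (L : α → Finset ℕ) : Prop :=
  ∃ φ : α → ℕ, ProperColoring G φ ∧ ∀ v ∈ G.verts, φ v ∈ L v

def chiList (G : HGraph α) : ℕ :=
  sInf {k | ∀ L : α → Finset ℕ, (∀ v ∈ G.verts, k ≤ (L v).card) → LColorable G L}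

def IsTKn (B : HGraph α) (t n : ℕ) : Prop :=
  1 ≤ n ∧ B.verts.card = n ∧ (∀ e ∈ B.edges, (B.inc e).card = 2) ∧
  ∀ u ∈ B.verts, ∀ v ∈ B.verts, u ≠ v → B.mult u v = t

def IsTCn (B : HGraph α) (t n : ℕ) : Prop :=
  3 ≤ n ∧ B.verts.card = n ∧ (∀ e ∈ B.edges, (B.inc e).card = 2) ∧
  ∃ f : ℕ → α,
    B.verts = (Finset.range n).image f ∧
    (∀ i < n, ∀ j < n, i ≠ j → f i ≠ f j) ∧
    ∀ i < n, ∀ j < n, i ≠ j →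
      B.mult (f i) (f j) = if j = (i + 1) % n ∨ i = (j + 1) % n then t else 0

def IsDPHyperbrick (B : HGraph α) : Prop :=
  (∃ t n, 1 ≤ t ∧ 1 ≤ n ∧ IsTKn B t n) ∨
  (∃ t n, 1 ≤ t ∧ 3 ≤ n ∧ IsTCn B t n) ∨
  (∃ e ∈ B.edges, B.verts = B.inc e ∧ B.edges = {e})

def AdjPair (G : HGraph α) (u v : α) : Prop :=
  u ≠ v ∧ ∃ e ∈ G.edges, G.inc e = {u, v}

def IsKConfig (G : HGraph α) (X : α → Finset β) (H : HGraph β) (t n : ℕ) : Prop :=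
  1 ≤ t ∧ 1 ≤ n ∧ IsTKn G t n ∧ IsCover G X H ∧
  ∃ P : α → ℕ → Finset β,
    (∀ v ∈ G.verts, ∀ i ∈ Finset.range (n - 1), ∀ j ∈ Finset.range (n - 1),
      i ≠ j → Disjoint (P v i) (P v j)) ∧
    (∀ v ∈ G.verts, X v = (Finset.range (n - 1)).biUnion (P v)) ∧
    (∀ v ∈ G.verts, ∀ i ∈ Finset.range (n - 1), (P v i).card = t) ∧
    (∀ i ∈ Finset.range (n - 1), ∀ u ∈ G.verts, ∀ v ∈ G.verts, u ≠ v →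
      ∀ x ∈ P u i, ∀ y ∈ P v i, ∃ e ∈ H.edges, H.inc e = {x, y}) ∧
    (∀ e ∈ H.edges, ∃ i ∈ Finset.range (n - 1), ∃ u ∈ G.verts, ∃ v ∈ G.verts,
      u ≠ v ∧ ∃ x ∈ P u i, ∃ y ∈ P v i, H.inc e = {x, y})

def IsOddCConfig (G : HGraph α) (X : α → Finset β) (H : HGraph β) (t n : ℕ) : Prop :=
  1 ≤ t ∧ 5 ≤ n ∧ Odd n ∧ IsTCn G t n ∧ IsCover G X H ∧
  ∃ P : α → ℕ → Finset β,
    (∀ v ∈ G.verts, Disjoint (P v 0) (P v 1)) ∧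
    (∀ v ∈ G.verts, X v = P v 0 ∪ P v 1) ∧
    (∀ v ∈ G.verts, (P v 0).card = t ∧ (P v 1).card = t) ∧
    (∀ i ∈ ({0, 1} : Finset ℕ), ∀ u ∈ G.verts, ∀ v ∈ G.verts, AdjPair G u v →
      ∀ x ∈ P u i, ∀ y ∈ P v i, ∃ e ∈ H.edges, H.inc e = {x, y}) ∧
    (∀ e ∈ H.edges, ∃ i ∈ ({0, 1} : Finset ℕ), ∃ u ∈ G.verts, ∃ v ∈ G.verts,
      AdjPair G u v ∧ ∃ x ∈ P u i, ∃ y ∈ P v i, H.inc e = {x, y})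

def IsEvenCConfig (G : HGraph α) (X : α → Finset β) (H : HGraph β) (t n : ℕ) : Prop :=
  1 ≤ t ∧ 4 ≤ n ∧ Even n ∧ IsTCn G t n ∧ IsCover G X H ∧
  ∃ P : α → ℕ → Finset β, ∃ w w' : α, w ∈ G.verts ∧ w' ∈ G.verts ∧ AdjPair G w w' ∧
    (∀ v ∈ G.verts, Disjoint (P v 0) (P v 1)) ∧
    (∀ v ∈ G.verts, X v = P v 0 ∪ P v 1) ∧
    (∀ v ∈ G.verts, (P v 0).card = t ∧ (P v 1).card = t) ∧
    (∀ i ∈ ({0, 1} : Finset ℕ), ∀ u ∈ G.verts, ∀ v ∈ G.verts, AdjPair G u v →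
      ({u, v} : Finset α) ≠ {w, w'} →
      ∀ x ∈ P u i, ∀ y ∈ P v i, ∃ e ∈ H.edges, H.inc e = {x, y}) ∧
    (∀ x ∈ P w 0, ∀ y ∈ P w' 1, ∃ e ∈ H.edges, H.inc e = {x, y}) ∧
    (∀ x ∈ P w 1, ∀ y ∈ P w' 0, ∃ e ∈ H.edges, H.inc e = {x, y}) ∧
    (∀ e ∈ H.edges, ∃ x y : β, H.inc e = {x, y} ∧
      ((∃ i ∈ ({0, 1} : Finset ℕ), ∃ u ∈ G.verts, ∃ v ∈ G.verts,
        AdjPair G u v ∧ ({u, v} : Finset α) ≠ {w, w'} ∧ x ∈ P u i ∧ y ∈ P v i) ∨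
       (x ∈ P w 0 ∧ y ∈ P w' 1) ∨ (x ∈ P w 1 ∧ y ∈ P w' 0)))

def IsEConfig (G : HGraph α) (X : α → Finset β) (H : HGraph β) : Prop :=
  (∃ e₀ ∈ G.edges, G.edges = {e₀} ∧ G.verts = G.inc e₀) ∧
  IsCover G X H ∧ (∀ v ∈ G.verts, (X v).card = 1) ∧
  ∃ e₁ ∈ H.edges, H.edges = {e₁} ∧ H.inc e₁ = G.verts.biUnion X

def IsMergeOf (G : HGraph α) (X : α → Finset β) (H : HGraph β)
    (G₁ : HGraph α) (X₁ : α → Finset β) (H₁ : HGraph β)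
    (G₂ : HGraph α) (X₂ : α → Finset β) (H₂ : HGraph β)
    (v₁ v₂ vs : α) : Prop :=
  Disjoint G₁.verts G₂.verts ∧ Disjoint G₁.edges G₂.edges ∧
  Disjoint H₁.verts H₂.verts ∧ Disjoint H₁.edges H₂.edges ∧
  v₁ ∈ G₁.verts ∧ v₂ ∈ G₂.verts ∧ vs ∉ G₁.verts ∪ G₂.verts ∧
  G.verts = insert vs (((G₁.verts ∪ G₂.verts).erase v₁).erase v₂) ∧
  G.edges = G₁.edges ∪ G₂.edges ∧
  (∀ e ∈ G₁.edges, G.inc e =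
    if v₁ ∈ G₁.inc e then insert vs ((G₁.inc e).erase v₁) else G₁.inc e) ∧
  (∀ e ∈ G₂.edges, G.inc e =
    if v₂ ∈ G₂.inc e then insert vs ((G₂.inc e).erase v₂) else G₂.inc e) ∧
  H.verts = H₁.verts ∪ H₂.verts ∧ H.edges = H₁.edges ∪ H₂.edges ∧
  (∀ e ∈ H₁.edges, H.inc e = H₁.inc e) ∧ (∀ e ∈ H₂.edges, H.inc e = H₂.inc e) ∧
  X vs = X₁ v₁ ∪ X₂ v₂ ∧
  (∀ u ∈ G₁.verts.erase v₁, X u = X₁ u) ∧ (∀ u ∈ G₂.verts.erase v₂, X u = X₂ u)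

inductive Constructible : HGraph α → (α → Finset β) → HGraph β → Prop where
  | K : ∀ {G : HGraph α} {X : α → Finset β} {H : HGraph β} {t n : ℕ},
      IsKConfig G X H t n → Constructible G X H
  | Codd : ∀ {G : HGraph α} {X : α → Finset β} {H : HGraph β} {t n : ℕ},
      IsOddCConfig G X H t n → Constructible G X H
  | Ceven : ∀ {G : HGraph α} {X : α → Finset β} {H : HGraph β} {t n : ℕ},
      IsEvenCConfig G X H t n → Constructible G X H
  | E : ∀ {G : HGraph α} {X : α → Finset β} {H : HGraph β},
      IsEConfig G X H → Constructible G X H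
  | merge : ∀ {G G₁ G₂ : HGraph α} {X X₁ X₂ : α → Finset β} {H H₁ H₂ : HGraph β}
      {v₁ v₂ vs : α},
      Constructible G₁ X₁ H₁ → Constructible G₂ X₂ H₂ →
      IsMergeOf G X H G₁ X₁ H₁ G₂ X₂ H₂ v₁ v₂ vs → Constructible G X H

def reducedVerts (G : HGraph α) (X : α → Finset β) (H : HGraph β)
    (v : α) (x : β) : Finset β :=
  (G.shrink v).verts.biUnion (fun u => X u \ H.nbhd x)

def reduceH (G : HGraph α) (X : α → Finset β) (H : HGraph β)
    (v : α) (x : β) : HGraph β where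
  verts := reducedVerts G X H v x
  edges := H.edges.filter (fun e =>
    2 ≤ ((H.inc e).erase x).card ∧ (H.inc e).erase x ⊆ reducedVerts G X H v x)
  inc := fun e => (H.inc e).erase x
  inc_sub := fun e he => (Finset.mem_filter.mp he).2.2
  inc_card := fun e he => (Finset.mem_filter.mp he).2.1

/-!
The inequality `|N_H(x) ∩ X_v| ≤ μ_G(v,z)` holds in every cover: each neighbour of `x` in `X_v`
is joined to `x` by a matching edge over its own ordinary edge `vz`. If it were strict, colour `z`
by `x` and delete `N_H(x)` from the other lists. This leaves a cover of `G ÷ z` that is still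
degree-feasible, with slack at `v`. As `z` is non-separating, every vertex of `G ÷ z` is reachable
from `v`, so colouring greedily in order of decreasing distance from `v` gives an independent
transversal, and with `x` one of `H`: a contradiction.
-/

open Relation

theorem Finset.card_erase_lt_two_iff {s : Finset α} (hs : 2 ≤ s.card) {u z : α} (hu : u ∈ s)
    (huz : u ≠ z) : (s.erase z).card < 2 ↔ s = {u, z} := by
  constructor
  · intro h
    have hz : z ∈ s := by
      by_contra hz
      rw [erase_eq_of_notMem hz] at h
      omega
    have hu' : u ∈ s.erase z := mem_erase.mpr ⟨huz, hu⟩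
    have : s.erase z = {u} := eq_singleton_iff_unique_mem.mpr
      ⟨hu', fun a ha => card_le_one.mp (by omega) a ha u hu'⟩
    rw [← insert_erase hz, this, pair_comm]
  · rintro rfl
    simp [huz]

theorem SimpleGraph.Reachable.exists_adj_dist_lt {V : Type*} {S : SimpleGraph V} {u v : V}
    (h : S.Reachable u v) (huv : u ≠ v) : ∃ w, S.Adj u w ∧ S.dist w v < S.dist u v := by
  obtain ⟨p, hp⟩ := h.exists_walk_length_eq_dist
  cases p with
  | nil => exact absurd rfl huv
  | cons hadj q =>
    rw [SimpleGraph.Walk.length_cons] at hp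
    exact ⟨_, hadj, (SimpleGraph.dist_le q).trans_lt (by omega)⟩

namespace HGraph

theorem degree_eq_degree_shrink_add_mult (G : HGraph α) {u z : α} (huz : u ≠ z) :
    G.degree u = (G.shrink z).degree u + G.mult u z := by
  have hshrink : (G.shrink z).degree u =
      ((G.edges.filter (fun e => u ∈ G.inc e)).filter (fun e => ¬ G.inc e = {u, z})).card := by
    simp only [degree, shrink]
    congr 1
    ext e
    simp only [mem_filter, mem_erase, ne_eq, huz, not_false_eq_true, true_and]
    constructor
    · rintro ⟨⟨he, h2⟩, hu⟩
      exact ⟨⟨he, hu⟩, fun h => by simp [h, huz] at h2⟩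
    · rintro ⟨⟨he, hu⟩, hne⟩
      have := mt (card_erase_lt_two_iff (G.inc_card e he) hu huz).mp hne
      exact ⟨⟨he, not_lt.mp this⟩, hu⟩
  have hmult : G.mult u z =
      ((G.edges.filter (fun e => u ∈ G.inc e)).filter (fun e => G.inc e = {u, z})).card := by
    rw [mult, filter_filter]
    exact congrArg card (filter_congr fun e _ => ⟨fun h => ⟨by simp [h], h⟩, And.right⟩)
  rw [hshrink, hmult, add_comm, card_filter_add_card_filter_not, degree]

theorem reflTransGen_shrink_of_mem_inc (G : HGraph α) {z : α} {e : ℕ} (he : e ∈ G.edges)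
    {a b : α} (ha : a ∈ (G.inc e).erase z) (hb : b ∈ (G.inc e).erase z) :
    ReflTransGen (G.shrink z).Adj a b := by
  rcases eq_or_ne a b with rfl | hab
  · exact .refl
  · have h2 : 2 ≤ ((G.inc e).erase z).card := one_lt_card.mpr ⟨a, ha, b, hb, hab⟩
    exact .single ⟨hab, e, mem_filter.mpr ⟨he, h2⟩, ha, hb⟩

/-- The component of `v` in `G ÷ z` and the rest, each together with `z`, split `G` at `z`. -/
theorem isSepVertex_of_not_reflTransGen_shrink (G : HGraph α) {z v u : α} (hz : z ∈ G.verts)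
    (hv : v ∈ (G.shrink z).verts) (hu : u ∈ (G.shrink z).verts)
    (hvu : ¬ ReflTransGen (G.shrink z).Adj v u) : G.IsSepVertex z := by
  set S := (G.shrink z).verts with hS
  set R := S.filter (ReflTransGen (G.shrink z).Adj v)
  have hzS : z ∉ S := notMem_erase z G.verts
  have hvR : v ∈ R := mem_filter.mpr ⟨hv, .refl⟩
  have huR : u ∈ S \ R := mem_sdiff.mpr ⟨hu, fun h => hvu (mem_filter.mp h).2⟩
  refine ⟨insert z R, insert z (S \ R), ?_, ?_, ?_, ?_, fun e he => ?_⟩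
  · rw [← insert_union_distrib, union_sdiff_of_subset (filter_subset _ _), hS, shrink,
      insert_erase hz]
  · rw [← insert_inter_distrib, inter_sdiff_self, insert_empty]
  · exact one_lt_card.mpr ⟨z, mem_insert_self z R, v, mem_insert_of_mem hvR,
      fun h => hzS (h ▸ hv)⟩
  · exact one_lt_card.mpr ⟨z, mem_insert_self _ _, u, mem_insert_of_mem huR,
      fun h => hzS (h ▸ hu)⟩
  · have hS' {b : α} (hb : b ∈ (G.inc e).erase z) : b ∈ S :=
      mem_erase.mpr ⟨(mem_erase.mp hb).1, G.inc_sub e he (mem_of_mem_erase hb)⟩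
    by_cases hmeet : ∃ a ∈ (G.inc e).erase z, a ∈ R
    · obtain ⟨a, ha, haR⟩ := hmeet
      left
      intro b hb
      rcases eq_or_ne b z with rfl | hbz
      · exact mem_insert_self b R
      · have hb' := mem_erase.mpr ⟨hbz, hb⟩
        exact mem_insert_of_mem (mem_filter.mpr
          ⟨hS' hb', (mem_filter.mp haR).2.trans (G.reflTransGen_shrink_of_mem_inc he ha hb')⟩)
    · right
      intro b hb
      rcases eq_or_ne b z with rfl | hbz
      · exact mem_insert_self b _
      · have hb' := mem_erase.mpr ⟨hbz, hb⟩
        exact mem_insert_of_mem (mem_sdiff.mpr ⟨hS' hb', fun h => hmeet ⟨b, hb', h⟩⟩)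

def adjGraph (G : HGraph α) : SimpleGraph α where
  Adj := G.Adj
  symm := ⟨fun _ _ ⟨hne, e, he, hu, hw⟩ => ⟨hne.symm, e, he, hw, hu⟩⟩
  loopless := ⟨fun _ h => h.1 rfl⟩

def backEdges (G : HGraph α) (C : Finset α) (w : α) : Finset ℕ :=
  G.edges.filter (fun e => w ∈ G.inc e ∧ G.inc e ⊆ insert w C)

section backEdges

variable (G : HGraph α) {C : Finset α} {w : α}

theorem backEdges_subset : G.backEdges C w ⊆ G.edges.filter (fun e => w ∈ G.inc e) :=
  monotone_filter_right _ fun _ _ => And.left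

theorem card_backEdges_le_degree : (G.backEdges C w).card ≤ G.degree w :=
  card_le_card G.backEdges_subset

theorem card_backEdges_lt_degree {w' : α} (hadj : G.Adj w' w) (hw' : w' ∉ C) :
    (G.backEdges C w).card < G.degree w := by
  obtain ⟨hne, e, he, hw'e, hwe⟩ := hadj
  refine card_lt_card ((ssubset_iff_of_subset G.backEdges_subset).mpr
    ⟨e, mem_filter.mpr ⟨he, hwe⟩, fun h => ?_⟩)
  rcases mem_insert.mp ((mem_filter.mp h).2.2 hw'e) with h' | h'
  exacts [hne h', hw' h']

end backEdges

end HGraph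

def IsITOn (H : HGraph β) (C : Finset α) (X : α → Finset β) (T : Finset β) : Prop :=
  H.IndepSet T ∧ T ⊆ C.biUnion X ∧ ∀ c ∈ C, (T ∩ X c).card = 1

omit [DecidableEq α] in
theorem isITOn_empty (H : HGraph β) (X : α → Finset β) : IsITOn H ∅ X ∅ :=
  ⟨fun e he hsub => (H.inc_card e he).not_gt (by simp [subset_empty.mp hsub]), by simp, by simp⟩

theorem reducedVerts_inter (G : HGraph α) (X : α → Finset β) (H : HGraph β) {z u : α}
    (hu : u ∈ G.verts) (huz : u ≠ z) (x : β) :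
    reducedVerts G X H z x ∩ X u = X u \ H.nbhd x := by
  ext y
  simp only [reducedVerts, shrink, mem_inter, mem_biUnion, mem_sdiff]
  constructor
  · rintro ⟨⟨c, -, -, hyx⟩, hyu⟩
    exact ⟨hyu, hyx⟩
  · rintro ⟨hyu, hyx⟩
    exact ⟨⟨u, mem_erase.mpr ⟨huz, hu⟩, hyu, hyx⟩, hyu⟩

namespace IsCover

variable {G : HGraph α} {X : α → Finset β} {H : HGraph β}

theorem eq_of_mem_of_mem (hC : IsCover G X H) {u w : α} (hu : u ∈ G.verts) (hw : w ∈ G.verts)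
    {y : β} (hyu : y ∈ X u) (hyw : y ∈ X w) : u = w := by
  by_contra hne
  exact Finset.disjoint_left.mp (hC.1 u hu w hw hne) hyu hyw

theorem card_inc_inter_le_one (hC : IsCover G X H) {e' : ℕ} (he' : e' ∈ H.edges) {u : α}
    (hu : u ∈ G.verts) : (H.inc e' ∩ X u).card ≤ 1 := by
  obtain ⟨M, hM, hMun⟩ := hC.2.2.2
  obtain ⟨e, he, he'M⟩ := mem_biUnion.mp (hMun ▸ he')
  obtain ⟨hone, hsub⟩ := (hM e he).2.1 e' he'M
  by_cases hue : u ∈ G.inc e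
  · exact (hone u hue).le
  · refine card_le_one.mpr fun y hy _ _ => absurd ?_ hue
    obtain ⟨u', hu', hyu'⟩ := mem_biUnion.mp (hsub (mem_inter.mp hy).1)
    rwa [hC.eq_of_mem_of_mem (G.inc_sub e he hu') hu hyu' (mem_inter.mp hy).2] at hu'

theorem card_nbhd_inter_le_mult (hC : IsCover G X H) {v z : α} (hv : v ∈ G.verts)
    (hz : z ∈ G.verts) (hvz : v ≠ z) {x : β} (hx : x ∈ X z) :
    (H.nbhd x ∩ X v).card ≤ G.mult v z := by
  obtain ⟨M, hM, hMun⟩ := hC.2.2.2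
  refine card_le_card_of_forall_subsingleton (fun y e => ∃ e' ∈ M e, H.inc e' = {x, y})
    (fun y hy => ?_) (fun e he y₁ hy₁ y₂ hy₂ => ?_)
  · obtain ⟨hy, hyv⟩ := mem_inter.mp hy
    obtain ⟨-, e', he', hinc⟩ := mem_filter.mp hy
    obtain ⟨e, he, he'M⟩ := mem_biUnion.mp (hMun ▸ he')
    obtain ⟨hone, hsub⟩ := (hM e he).2.1 e' he'M
    have hmem_inc {w : α} {t : β} (hw : w ∈ G.verts) (ht : t ∈ X w) (hte : t ∈ H.inc e') :
        w ∈ G.inc e := by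
      obtain ⟨u, hu, htu⟩ := mem_biUnion.mp (hsub hte)
      rwa [hC.eq_of_mem_of_mem (G.inc_sub e he hu) hw htu ht] at hu
    refine ⟨e, mem_filter.mpr ⟨he, Subset.antisymm (fun u hu => ?_) ?_⟩, e', he'M, hinc⟩
    · obtain ⟨t, ht⟩ := card_pos.mp ((hone u hu).symm ▸ Nat.one_pos)
      obtain ⟨hte, htu⟩ := mem_inter.mp ht
      have huV := G.inc_sub e he hu
      rw [hinc, mem_insert, mem_singleton] at hte
      rcases hte with rfl | rfl
      · simp [hC.eq_of_mem_of_mem huV hz htu hx]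
      · simp [hC.eq_of_mem_of_mem huV hv htu hyv]
    · rw [insert_subset_iff, singleton_subset_iff]
      exact ⟨hmem_inc hv hyv (by simp [hinc]), hmem_inc hz hx (by simp [hinc])⟩
  · obtain ⟨e₁', he₁', hinc₁⟩ := hy₁.2
    obtain ⟨e₂', he₂', hinc₂⟩ := hy₂.2
    have he' : e₁' = e₂' := by
      by_contra hne
      exact disjoint_left.mp ((hM e (mem_filter.mp he).1).2.2 e₁' he₁' e₂' he₂' hne)
        (show x ∈ H.inc e₁' by simp [hinc₁]) (show x ∈ H.inc e₂' by simp [hinc₂])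
    have hy₁x : y₁ ≠ x := fun h =>
      hvz (hC.eq_of_mem_of_mem hv hz (h ▸ (mem_inter.mp hy₁.1).2) hx)
    have hy₁ : y₁ ∈ ({x, y₂} : Finset β) := by rw [← hinc₂, ← he', hinc₁]; simp
    simpa [hy₁x] using hy₁

omit [DecidableEq α] in
theorem disjoint_biUnion (hC : IsCover G X H) {C : Finset α} (hCV : C ⊆ G.verts) {w : α}
    (hw : w ∈ G.verts) (hwC : w ∉ C) : Disjoint (C.biUnion X) (X w) :=
  (disjoint_biUnion_left _ _ _).mpr fun c hc =>
    hC.1 c (hCV hc) w hw (ne_of_mem_of_not_mem hc hwC)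

theorem isITOn_insert (hC : IsCover G X H) {C : Finset α} (hCV : C ⊆ G.verts) {w : α}
    (hw : w ∈ G.verts) (hwC : w ∉ C) {T : Finset β} (hT : IsITOn H C X T) {x : β}
    (hx : x ∈ X w) (hind : H.IndepSet (insert x T)) : IsITOn H (insert w C) X (insert x T) := by
  refine ⟨hind, insert_subset (mem_biUnion.mpr ⟨w, mem_insert_self w C, hx⟩)
    (hT.2.1.trans (biUnion_subset_biUnion_of_subset_left _ (subset_insert w C))), ?_⟩
  intro c hc
  rcases mem_insert.mp hc with rfl | hc
  · have hTc : T ∩ X c = ∅ :=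
      disjoint_iff_inter_eq_empty.mp ((hC.disjoint_biUnion hCV hw hwC).mono_left hT.2.1)
    rw [insert_inter_of_mem hx, hTc, insert_empty, card_singleton]
  · have hxc : x ∉ X c := fun hxc =>
      hwC (hC.eq_of_mem_of_mem hw (hCV hc) hx hxc ▸ hc)
    rw [insert_inter_of_notMem hxc, hT.2.2 c hc]

/-- Each colour of `X w` that cannot be added to `T` is blocked by an edge of `H` lying over a
back edge at `w`, and distinct colours are blocked over distinct back edges. -/
theorem card_blocked_le (hC : IsCover G X H) {C : Finset α} (hCV : C ⊆ G.verts) {w : α}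
    (hw : w ∈ G.verts) {T : Finset β} (hT : IsITOn H C X T) :
    ((X w).filter (fun x => ¬ H.IndepSet (insert x T))).card ≤ (G.backEdges C w).card := by
  obtain ⟨M, hM, hMun⟩ := hC.2.2.2
  have hmeet {e e' : ℕ} (he : e ∈ G.edges) (he' : e' ∈ M e) {x : β} (hx : x ∈ X w)
      (hsub : H.inc e' ⊆ insert x T) {u : α} (hu : u ∈ G.inc e) (huw : u ≠ w) :
      u ∈ C ∧ ∃ t ∈ T, t ∈ H.inc e' ∩ X u := by
    obtain ⟨t, ht⟩ := card_pos.mp (((hM e he).2.1 e' he').1 u hu ▸ Nat.one_pos)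
    have huV := G.inc_sub e he hu
    have htT : t ∈ T := (mem_insert.mp (hsub (mem_inter.mp ht).1)).resolve_left fun htx =>
      huw (hC.eq_of_mem_of_mem huV hw (mem_inter.mp ht).2 (htx ▸ hx))
    obtain ⟨c, hc, htc⟩ := mem_biUnion.mp (hT.2.1 htT)
    exact ⟨hC.eq_of_mem_of_mem (hCV hc) huV htc (mem_inter.mp ht).2 ▸ hc, t, htT, ht⟩
  refine card_le_card_of_forall_subsingleton
    (fun x e => ∃ e' ∈ M e, x ∈ H.inc e' ∧ H.inc e' ⊆ insert x T)
    (fun x hx => ?_) (fun e he x₁ hx₁ x₂ hx₂ => ?_)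
  · obtain ⟨hxw, hblocked⟩ := mem_filter.mp hx
    obtain ⟨e', he'H, hsub⟩ : ∃ e' ∈ H.edges, H.inc e' ⊆ insert x T := by
      simpa [IndepSet] using hblocked
    have hxe' : x ∈ H.inc e' := by
      by_contra hxe'
      exact hT.1 e' he'H ((subset_insert_iff_of_notMem hxe').mp hsub)
    obtain ⟨e, he, he'⟩ := mem_biUnion.mp (hMun ▸ he'H)
    have hwe : w ∈ G.inc e := by
      obtain ⟨u, hu, hxu⟩ := mem_biUnion.mp (((hM e he).2.1 e' he').2 hxe')
      rwa [hC.eq_of_mem_of_mem (G.inc_sub e he hu) hw hxu hxw] at hu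
    refine ⟨e, mem_filter.mpr ⟨he, hwe, fun u hu => ?_⟩, e', he', hxe', hsub⟩
    rcases eq_or_ne u w with rfl | huw
    · exact mem_insert_self u C
    · exact mem_insert_of_mem (hmeet he he' hxw hsub hu huw).1
  · obtain ⟨he, hwe, -⟩ := mem_filter.mp he
    obtain ⟨e₁', he₁', hx₁e, hsub₁⟩ := hx₁.2
    obtain ⟨e₂', he₂', hx₂e, hsub₂⟩ := hx₂.2
    have hx₁w := (mem_filter.mp hx₁.1).1
    have hx₂w := (mem_filter.mp hx₂.1).1
    obtain ⟨u, hu, huw⟩ := exists_mem_ne (G.inc_card e he) w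
    obtain ⟨huC, t₁, ht₁T, ht₁⟩ := hmeet he he₁' hx₁w hsub₁ hu huw
    obtain ⟨-, t₂, ht₂T, ht₂⟩ := hmeet he he₂' hx₂w hsub₂ hu huw
    have ht : t₁ = t₂ := card_le_one.mp (hT.2.2 u huC).le
      t₁ (mem_inter.mpr ⟨ht₁T, (mem_inter.mp ht₁).2⟩)
      t₂ (mem_inter.mpr ⟨ht₂T, (mem_inter.mp ht₂).2⟩)
    have he' : e₁' = e₂' := by
      by_contra hne
      exact disjoint_left.mp ((hM e he).2.2 e₁' he₁' e₂' he₂' hne) (mem_inter.mp ht₁).1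
        (ht ▸ (mem_inter.mp ht₂).1)
    exact card_le_one.mp (hC.card_inc_inter_le_one ((hM e he).1 he₁') hw) x₁
      (mem_inter.mpr ⟨hx₁e, hx₁w⟩) x₂ (mem_inter.mpr ⟨he' ▸ hx₂e, hx₂w⟩)

theorem exists_isITOn_insert (hC : IsCover G X H) {C : Finset α} (hCV : C ⊆ G.verts) {w : α}
    (hw : w ∈ G.verts) (hwC : w ∉ C) {T : Finset β} (hT : IsITOn H C X T)
    (hback : (G.backEdges C w).card < (X w).card) :
    ∃ x ∈ X w, IsITOn H (insert w C) X (insert x T) := by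
  obtain ⟨x, hx, hfree⟩ := exists_mem_notMem_of_card_lt_card
    ((hC.card_blocked_le hCV hw hT).trans_lt hback)
  exact ⟨x, hx, hC.isITOn_insert hCV hw hwC hT hx (by simpa [hx] using hfree)⟩

/-- Greedy colouring in order of decreasing rank: every `w ≠ v` still has an uncoloured
neighbour of lower rank, so at most `d(w) - 1` of its edges are back edges, while `v`, coloured
last, has slack. -/
theorem hasIT_of_rank (hC : IsCover G X H) (hdf : ∀ u ∈ G.verts, G.degree u ≤ (X u).card)
    {v : α} (hslack : G.degree v < (X v).card) (f : α → ℕ)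
    (hf : ∀ u ∈ G.verts, u ≠ v → ∃ w, G.Adj w u ∧ f w < f u) : HasIT H G.verts X := by
  suffices key : ∀ n (C : Finset α) (T : Finset β), (G.verts \ C).card = n →
      C ⊆ G.verts → (∀ c ∈ C, ∀ u ∈ G.verts \ C, f u ≤ f c) → IsITOn H C X T →
      HasIT H G.verts X from
    key _ ∅ ∅ rfl (empty_subset _) (by simp) (isITOn_empty H X)
  intro n
  induction n with
  | zero =>
    intro C T hn hCV _ hT
    have hCeq : C = G.verts :=
      Subset.antisymm hCV (sdiff_eq_empty_iff_subset.mp (card_eq_zero.mp hn))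
    exact ⟨T, hT.1, hCeq ▸ hT.2.2⟩
  | succ n ih =>
    intro C T hn hCV hrank hT
    obtain ⟨w, hw, hmax⟩ := exists_max_image (G.verts \ C) f (card_pos.mp (by omega))
    obtain ⟨hwV, hwC⟩ := mem_sdiff.mp hw
    have hback : (G.backEdges C w).card < (X w).card := by
      rcases eq_or_ne w v with rfl | hwv
      · exact G.card_backEdges_le_degree.trans_lt hslack
      · obtain ⟨w', hadj, hlt⟩ := hf w hwV hwv
        have hw'C : w' ∉ C := fun hw'C => (hrank w' hw'C w hw).not_gt hlt
        exact (G.card_backEdges_lt_degree hadj hw'C).trans_le (hdf w hwV)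
    obtain ⟨x, -, hT'⟩ := hC.exists_isITOn_insert hCV hwV hwC hT hback
    refine ih (insert w C) (insert x T) ?_ (insert_subset hwV hCV) ?_ hT'
    · rw [sdiff_insert, card_erase_of_mem hw, hn, Nat.add_sub_cancel]
    · intro c hc u hu
      rw [sdiff_insert] at hu
      rcases mem_insert.mp hc with rfl | hc
      · exact hmax u (mem_of_mem_erase hu)
      · exact hrank c hc u (mem_of_mem_erase hu)

theorem hasIT_of_degree_le_of_lt (hC : IsCover G X H)
    (hdf : ∀ u ∈ G.verts, G.degree u ≤ (X u).card) {v : α} (hslack : G.degree v < (X v).card)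
    (hreach : ∀ u ∈ G.verts, ReflTransGen G.Adj v u) : HasIT H G.verts X :=
  hC.hasIT_of_rank hdf hslack (fun u => G.adjGraph.dist u v) fun u hu huv =>
    have hr : G.adjGraph.Reachable u v :=
      ((SimpleGraph.reachable_iff_reflTransGen (G := G.adjGraph) v u).mpr (hreach u hu)).symm
    let ⟨w, hadj, hlt⟩ := hr.exists_adj_dist_lt huv
    ⟨w, hadj.symm, hlt⟩

theorem disjoint_reducedVerts (hC : IsCover G X H) {z : α} (hz : z ∈ G.verts) (x : β) :
    Disjoint (reducedVerts G X H z x) (X z) :=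
  (hC.disjoint_biUnion (erase_subset z G.verts) hz (notMem_erase z G.verts)).mono_left
    (biUnion_mono fun _ _ => sdiff_subset)

theorem erase_inter_sdiff_nbhd (hC : IsCover G X H) {z : α} (hz : z ∈ G.verts) {x : β}
    (hx : x ∈ X z) {s : Finset β} (hs : s.erase x ⊆ reducedVerts G X H z x) {u : α}
    (hu : u ∈ (G.shrink z).verts) : s.erase x ∩ (X u \ H.nbhd x) = s ∩ X u := by
  obtain ⟨huz, huV⟩ := mem_erase.mp hu
  have hxu : x ∉ s ∩ X u := fun h => huz (hC.eq_of_mem_of_mem huV hz (mem_inter.mp h).2 hx)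
  rw [← reducedVerts_inter G X H huV huz, ← inter_assoc, inter_eq_left.mpr hs, erase_inter,
    erase_eq_of_notMem hxu]

theorem indepSet_reduceH (hC : IsCover G X H) {z : α} (hz : z ∈ G.verts) {x : β}
    (hx : x ∈ X z) {u : α} (hu : u ∈ (G.shrink z).verts) :
    (reduceH G X H z x).IndepSet (X u \ H.nbhd x) := by
  intro e he hsub
  obtain ⟨heH, h2, hR⟩ := mem_filter.mp he
  have hsub : (H.inc e).erase x ⊆ X u \ H.nbhd x := hsub
  have hle := hC.card_inc_inter_le_one heH (mem_of_mem_erase hu)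
  rw [← hC.erase_inter_sdiff_nbhd hz hx hR hu, inter_eq_left.mpr hsub] at hle
  omega

/-- The matchings of the reduced cover are those of `(G, X, H)`, restricted to the surviving
edges of `H`. -/
theorem reduce (hC : IsCover G X H) {z : α} (hz : z ∈ G.verts) {x : β} (hx : x ∈ X z) :
    IsCover (G.shrink z) (fun u => X u \ H.nbhd x) (reduceH G X H z x) := by
  obtain ⟨M, hM, hMun⟩ := hC.2.2.2
  have hover {e e' : ℕ} (he : e ∈ G.edges) (he' : e' ∈ M e)
      (hR : (H.inc e').erase x ⊆ reducedVerts G X H z x) :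
      (H.inc e').erase x ⊆
        ((G.inc e).erase z).biUnion (fun u => H.inc e' ∩ (X u \ H.nbhd x)) := by
    intro y hy
    obtain ⟨c, hc, hyc⟩ := mem_biUnion.mp (hR hy)
    obtain ⟨u, hu, hyu⟩ := mem_biUnion.mp (((hM e he).2.1 e' he').2 (mem_of_mem_erase hy))
    obtain rfl := hC.eq_of_mem_of_mem (mem_of_mem_erase hc) (G.inc_sub e he hu)
      (mem_sdiff.mp hyc).1 hyu
    exact mem_biUnion.mpr ⟨c, mem_erase.mpr ⟨ne_of_mem_erase hc, hu⟩,
      mem_inter.mpr ⟨mem_of_mem_erase hy, hyc⟩⟩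
  refine ⟨fun u hu w hw hne => (hC.1 u (mem_of_mem_erase hu) w (mem_of_mem_erase hw) hne).mono
    sdiff_subset sdiff_subset, rfl, fun u hu => hC.indepSet_reduceH hz hx hu,
    fun e => (M e).filter (· ∈ (reduceH G X H z x).edges), fun e he => ?_, ?_⟩
  · have heG := (mem_filter.mp he).1
    refine ⟨fun e' he' => (mem_filter.mp he').2, fun e' he' => ⟨fun u hu => ?_, ?_⟩,
      fun e₁ h₁ e₂ h₂ hne => ((hM e heG).2.2 e₁ (mem_filter.mp h₁).1 e₂
        (mem_filter.mp h₂).1 hne).mono (erase_subset x _) (erase_subset x _)⟩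
    all_goals obtain ⟨he'M, he'R⟩ := mem_filter.mp he'
    all_goals obtain ⟨-, -, hR⟩ := mem_filter.mp he'R
    · have huV := G.inc_sub e heG (mem_of_mem_erase hu)
      change ((H.inc e').erase x ∩ (X u \ H.nbhd x)).card = 1
      rw [hC.erase_inter_sdiff_nbhd hz hx hR (mem_erase.mpr ⟨ne_of_mem_erase hu, huV⟩)]
      exact ((hM e heG).2.1 e' he'M).1 u (mem_of_mem_erase hu)
    · exact (hover heG he'M hR).trans (biUnion_mono fun _ _ => inter_subset_right)
  · ext e'
    simp only [mem_biUnion, mem_filter]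
    refine ⟨fun he' => ?_, fun ⟨_, _, _, he'⟩ => he'⟩
    obtain ⟨he'H, h2, hR⟩ := mem_filter.mp he'
    obtain ⟨e, he, he'M⟩ := mem_biUnion.mp (hMun ▸ he'H)
    refine ⟨e, mem_filter.mpr ⟨he, h2.trans ?_⟩, he'M, he'⟩
    calc ((H.inc e').erase x).card
        ≤ (((G.inc e).erase z).biUnion (fun u => H.inc e' ∩ (X u \ H.nbhd x))).card :=
          card_le_card (hover he he'M hR)
      _ ≤ ((G.inc e).erase z).card * 1 := card_biUnion_le_card_mul _ _ _ fun u hu =>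
          (card_le_card (inter_subset_inter_left sdiff_subset)).trans
            (hC.card_inc_inter_le_one he'H (G.inc_sub e he (mem_of_mem_erase hu)))
      _ = ((G.inc e).erase z).card := mul_one _

theorem hasIT_of_hasIT_reduceH (hC : IsCover G X H) {z : α} (hz : z ∈ G.verts) {x : β}
    (hx : x ∈ X z)
    (hT : HasIT (reduceH G X H z x) (G.shrink z).verts (fun u => X u \ H.nbhd x)) :
    HasIT H G.verts X := by
  obtain ⟨T, hTind, hTcard⟩ := hT
  set R := reducedVerts G X H z x
  refine ⟨insert x (T ∩ R), fun e he hsub => ?_, fun u hu => ?_⟩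
  · rw [subset_insert_iff] at hsub
    by_cases h2 : 2 ≤ ((H.inc e).erase x).card
    · exact hTind e (mem_filter.mpr ⟨he, h2, hsub.trans inter_subset_right⟩)
        (hsub.trans inter_subset_left)
    · -- then `H.inc e = {x, y}` with `y ∈ R`, which avoids `N_H(x)`
      have hxe : x ∈ H.inc e := by
        by_contra hxe
        rw [erase_eq_of_notMem hxe] at h2
        exact h2 (H.inc_card e he)
      obtain ⟨y, hy⟩ : ∃ y, (H.inc e).erase x = {y} := card_eq_one.mp (by
        have := card_erase_of_mem hxe
        have := H.inc_card e he
        omega)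
      have hye : y ∈ (H.inc e).erase x := hy ▸ mem_singleton_self y
      obtain ⟨c, -, hyc⟩ := mem_biUnion.mp (mem_inter.mp (hsub hye)).2
      exact (mem_sdiff.mp hyc).2 (mem_filter.mpr
        ⟨H.inc_sub e he (mem_of_mem_erase hye), e, he, by rw [← insert_erase hxe, hy]⟩)
  · rcases eq_or_ne u z with rfl | huz
    · rw [insert_inter_of_mem hx, inter_assoc,
        disjoint_iff_inter_eq_empty.mp (hC.disjoint_reducedVerts hu x), inter_empty,
        insert_empty, card_singleton]
    · have hxu : x ∉ X u := fun h => huz (hC.eq_of_mem_of_mem hu hz h hx)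
      rw [insert_inter_of_notMem hxu, inter_assoc, reducedVerts_inter G X H hu huz]
      exact hTcard u (mem_erase.mpr ⟨huz, hu⟩)

end IsCover

theorem uncolorable_nbhd_card_general (G : HGraph α) (X : α → Finset β) (H : HGraph β)
    (hC : IsCover G X H)
    (hdf : ∀ v ∈ G.verts, G.degree v ≤ (X v).card)
    (hunc : ¬ HasIT H G.verts X)
    (z : α) (hz : z ∈ G.verts) (hns : ¬ IsSepVertex G z)
    (v : α) (hv : v ∈ G.verts) (hvz : v ≠ z) (x : β) (hx : x ∈ X z) :
    (H.nbhd x ∩ X v).card = G.mult v z := by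
  refine (hC.card_nbhd_inter_le_mult hv hz hvz hx).antisymm (not_lt.mp fun hlt => hunc ?_)
  have hcount {u : α} (hu : u ∈ G.verts) (huz : u ≠ z) :
      (G.shrink z).degree u + G.mult u z = G.degree u ∧
      (X u \ H.nbhd x).card + (H.nbhd x ∩ X u).card = (X u).card ∧
      (H.nbhd x ∩ X u).card ≤ G.mult u z :=
    ⟨(G.degree_eq_degree_shrink_add_mult huz).symm,
      by rw [inter_comm]; exact card_sdiff_add_card_inter _ _,
      hC.card_nbhd_inter_le_mult hu hz huz hx⟩
  refine hC.hasIT_of_hasIT_reduceH hz hx ((hC.reduce hz hx).hasIT_of_degree_le_of_lt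
    (fun u hu => ?_) (v := v) ?_ fun u hu => ?_)
  · obtain ⟨huz, huV⟩ := mem_erase.mp hu
    have := hcount huV huz
    have := hdf u huV
    omega
  · have := hcount hv hvz
    have := hdf v hv
    omega
  · by_contra hvu
    exact hns (G.isSepVertex_of_not_reflTransGen_shrink hz (mem_erase.mpr ⟨hvz, hv⟩) hu hvu)

/-- in an uncolorable degree-feasible configuration,
|N_H(x) ∩ X_v| = μ_G(v,z) for every non-separating vertex z, v ≠ z and x ∈ X_z. -/
theorem uncolorable_nbhd_card (G : HGraph α) (X : α → Finset β) (H : HGraph β)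
    (hG : G.Connected) (hC : IsCover G X H)
    (hdf : ∀ v ∈ G.verts, G.degree v ≤ (X v).card)
    (hunc : ¬ HasIT H G.verts X)
    (z : α) (hz : z ∈ G.verts) (hns : ¬ IsSepVertex G z)
    (v : α) (hv : v ∈ G.verts) (hvz : v ≠ z) (x : β) (hx : x ∈ X z) :
    (H.nbhd x ∩ X v).card = G.mult v z :=
  uncolorable_nbhd_card_general G X H hC hdf hunc z hz hns v hv hvz x hx
end
end

section
/- Let (G,X,H) be an uncolorable degree-feasible configuration. Then for every vertex v ∈ V(G) there is an independent set T in H with |T ∩ X_u| = 1 for all u ∈ V(G) \ {v}. -/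
open Finset

noncomputable section
open scoped Classical

variable {α β : Type} [DecidableEq α] [DecidableEq β]

open HGraph

/-!
Colour the vertices other than `v` greedily, in the reverse of an order that starts at `v` and in
which every vertex is adjacent to an earlier one (connectivity provides it). Each vertex `w` is
then coloured while a neighbour `u₀`, joined to it by an edge `e₀`, is still uncoloured. The edges
of `H` over an edge `e` of `G` form a matching, so the colours already placed exclude at most one
colour of `w` for each edge `e ∋ w`, and none for `e₀`; as `d(w) - 1 < |X_w|`, some colour of `w`
survives.
-/

namespace HGraph

lemma Connected.exists_adj_of_mem_of_notMem {V : Type} [DecidableEq V] {G : HGraph V}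
    (hG : G.Connected) {U : Finset V} {a b : V} (ha : a ∈ U) (haV : a ∈ G.verts)
    (hb : b ∈ G.verts) (hbU : b ∉ U) :
    ∃ u ∈ U, ∃ w ∈ G.verts \ U, G.Adj u w := by
  by_contra! hU
  suffices ∀ y, Relation.ReflTransGen G.Adj a y → y ∈ U from hbU (this b (hG a haV b hb))
  intro y hy
  induction hy with
  | refl => exact ha
  | @tail x y _ hxy hx =>
    by_contra hyU
    obtain ⟨e, he, -, hye⟩ := hxy.2
    exact hU x hx y (mem_sdiff.mpr ⟨G.inc_sub e he hye, hyU⟩) hxy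

lemma IndepSet.mem_of_inc_subset_insert {H : HGraph β} {T : Finset β} (hT : H.IndepSet T)
    {e : ℕ} (he : e ∈ H.edges) {x : β} (hsub : H.inc e ⊆ insert x T) : x ∈ H.inc e := by
  by_contra hx
  exact hT e he fun y hy => mem_of_mem_insert_of_ne (hsub hy) (ne_of_mem_of_not_mem hy hx)

end HGraph

/-- The matching part of a cover: `M e` is the matching of `H` lying over the edge `e` of `G`. -/
def IsCoverMatching {V : Type} (G : HGraph V) (X : V → Finset β) (H : HGraph β)
    (M : ℕ → Finset ℕ) : Prop :=
  ∀ e ∈ G.edges,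
    M e ⊆ H.edges ∧
    (∀ e' ∈ M e, (∀ v ∈ G.inc e, (H.inc e' ∩ X v).card = 1) ∧
      H.inc e' ⊆ (G.inc e).biUnion X) ∧
    ∀ e₁ ∈ M e, ∀ e₂ ∈ M e, e₁ ≠ e₂ → Disjoint (H.inc e₁) (H.inc e₂)

def IsIT {V : Type} (H : HGraph β) (S : Finset V) (X : V → Finset β) (T : Finset β) : Prop :=
  H.IndepSet T ∧ T ⊆ S.biUnion X ∧ ∀ u ∈ S, (T ∩ X u).card = 1

section Greedy

variable {V : Type} {G : HGraph V} {X : V → Finset β} {H : HGraph β} {M : ℕ → Finset ℕ}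
  {T : Finset β}

lemma IsCoverMatching.exists_mem_inter_of_inc_subset_insert
    (hX : (G.verts : Set V).PairwiseDisjoint X) (hM : IsCoverMatching G X H M)
    {e e' : ℕ} (he : e ∈ G.edges) (he' : e' ∈ M e) {u w : V} (hu : u ∈ G.inc e)
    (hw : w ∈ G.verts) (huw : u ≠ w) {x : β} (hx : x ∈ X w) (hsub : H.inc e' ⊆ insert x T) :
    ∃ y ∈ T ∩ X u, y ∈ H.inc e' := by
  obtain ⟨y, hy⟩ := card_eq_one.mp (((hM e he).2.1 e' he').1 u hu)
  obtain ⟨hye', hyu⟩ := mem_inter.mp (hy ▸ mem_singleton_self y)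
  have hyx : y ≠ x := fun h =>
    disjoint_left.mp (hX (G.inc_sub e he hu) hw huw) hyu (h ▸ hx)
  exact ⟨y, mem_inter.mpr ⟨mem_of_mem_insert_of_ne (hsub hye') hyx, hyu⟩, hye'⟩

/-- Against a partial transversal `T`, the matching over an edge `e` at `w` blocks at most one
colour of `w`: the edges blocking two colours would meet `T` in the same vertex over another end
of `e`. -/
lemma IsCoverMatching.eq_of_inc_subset_insert
    (hX : (G.verts : Set V).PairwiseDisjoint X) (hM : IsCoverMatching G X H M)
    (hT : H.IndepSet T) (hTle : ∀ u ∈ G.verts, (T ∩ X u).card ≤ 1)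
    {e : ℕ} (he : e ∈ G.edges) {w : V} (hw : w ∈ G.inc e) {x₁ x₂ : β}
    (hx₁ : x₁ ∈ X w) (hx₂ : x₂ ∈ X w) {e₁ e₂ : ℕ} (he₁ : e₁ ∈ M e) (he₂ : e₂ ∈ M e)
    (h₁ : H.inc e₁ ⊆ insert x₁ T) (h₂ : H.inc e₂ ⊆ insert x₂ T) : x₁ = x₂ := by
  obtain ⟨hMH, hMinc, hMdisj⟩ := hM e he
  have hwV := G.inc_sub e he hw
  obtain ⟨u, hu, huw⟩ := exists_mem_ne (G.inc_card e he) w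
  obtain ⟨y₁, hy₁T, hy₁⟩ :=
    hM.exists_mem_inter_of_inc_subset_insert hX he he₁ hu hwV huw hx₁ h₁
  obtain ⟨y₂, hy₂T, hy₂⟩ :=
    hM.exists_mem_inter_of_inc_subset_insert hX he he₂ hu hwV huw hx₂ h₂
  have hy : y₁ = y₂ := card_le_one.mp (hTle u (G.inc_sub e he hu)) y₁ hy₁T y₂ hy₂T
  have he₁₂ : e₁ = e₂ := by
    by_contra hne
    exact disjoint_left.mp (hMdisj e₁ he₁ e₂ he₂ hne) hy₁ (hy ▸ hy₂)
  subst he₁₂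
  have hmem : ∀ {x}, x ∈ X w → H.inc e₁ ⊆ insert x T → x ∈ H.inc e₁ ∩ X w := fun hx hsub =>
    mem_inter.mpr ⟨hT.mem_of_inc_subset_insert (hMH he₁) hsub, hx⟩
  exact card_le_one.mp ((hMinc e₁ he₁).1 w hw).le x₁ (hmem hx₁ h₁) x₂ (hmem hx₂ h₂)

lemma IsCoverMatching.exists_blocking_edge (hX : (G.verts : Set V).PairwiseDisjoint X)
    (hM : IsCoverMatching G X H M) (hHM : H.edges = G.edges.biUnion M) (hT : H.IndepSet T)
    {w : V} (hw : w ∈ G.verts) {x : β} (hx : x ∈ X w) (hxT : ¬ H.IndepSet (insert x T)) :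
    ∃ e ∈ G.edges, w ∈ G.inc e ∧ ∃ e' ∈ M e, H.inc e' ⊆ insert x T := by
  obtain ⟨e', he', he'T⟩ : ∃ e' ∈ H.edges, H.inc e' ⊆ insert x T := by
    simpa [IndepSet] using hxT
  obtain ⟨e, he, he'M⟩ := mem_biUnion.mp (hHM ▸ he')
  obtain ⟨u, hue, hxu⟩ :=
    mem_biUnion.mp (((hM e he).2.1 e' he'M).2 (hT.mem_of_inc_subset_insert he' he'T))
  have huw : u = w := by
    by_contra huw
    exact disjoint_left.mp (hX (G.inc_sub e he hue) hw huw) hxu hx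
  exact ⟨e, he, huw ▸ hue, e', he'M, he'T⟩

lemma IsCoverMatching.exists_indepSet_insert [DecidableEq V]
    (hX : (G.verts : Set V).PairwiseDisjoint X) (hM : IsCoverMatching G X H M)
    (hHM : H.edges = G.edges.biUnion M) (hT : H.IndepSet T)
    (hTle : ∀ u ∈ G.verts, (T ∩ X u).card ≤ 1) {w : V} (hdeg : G.degree w ≤ (X w).card)
    {e₀ : ℕ} (he₀ : e₀ ∈ G.edges) (hwe₀ : w ∈ G.inc e₀) {u₀ : V} (hu₀ : u₀ ∈ G.inc e₀)
    (hu₀w : u₀ ≠ w) (hTu₀ : T ∩ X u₀ = ∅) : ∃ x ∈ X w, H.IndepSet (insert x T) := by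
  set Ew := G.edges.filter fun e => w ∈ G.inc e
  set bad := (X w).filter fun x => ¬ H.IndepSet (insert x T)
  set blocked : ℕ → Finset β := fun e =>
    (X w).filter fun x => ∃ e' ∈ M e, H.inc e' ⊆ insert x T
  have hwV : w ∈ G.verts := G.inc_sub e₀ he₀ hwe₀
  have hsub : bad ⊆ (Ew.erase e₀).biUnion blocked := by
    intro x hx
    obtain ⟨hxw, hxT⟩ := mem_filter.mp hx
    obtain ⟨e, he, hwe, e', he'M, he'T⟩ := hM.exists_blocking_edge hX hHM hT hwV hxw hxT
    have hee₀ : e ≠ e₀ := by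
      rintro rfl
      obtain ⟨y, hy, -⟩ :=
        hM.exists_mem_inter_of_inc_subset_insert hX he he'M hu₀ hwV hu₀w hxw he'T
      exact absurd hy (hTu₀ ▸ notMem_empty y)
    exact mem_biUnion.mpr ⟨e, mem_erase.mpr ⟨hee₀, mem_filter.mpr ⟨he, hwe⟩⟩,
      mem_filter.mpr ⟨hxw, e', he'M, he'T⟩⟩
  have hblocked : ∀ e ∈ Ew.erase e₀, (blocked e).card ≤ 1 := by
    intro e he
    obtain ⟨heG, hwe⟩ := mem_filter.mp (mem_of_mem_erase he)
    refine card_le_one.mpr fun x₁ hx₁ x₂ hx₂ => ?_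
    obtain ⟨hx₁w, e₁, he₁, h₁⟩ := mem_filter.mp hx₁
    obtain ⟨hx₂w, e₂, he₂, h₂⟩ := mem_filter.mp hx₂
    exact hM.eq_of_inc_subset_insert hX hT hTle heG hwe hx₁w hx₂w he₁ he₂ h₁ h₂
  have hEw : (Ew.erase e₀).card + 1 = G.degree w :=
    card_erase_add_one (mem_filter.mpr ⟨he₀, hwe₀⟩)
  have hlt : bad.card < (X w).card := calc
    _ ≤ ((Ew.erase e₀).biUnion blocked).card := card_le_card hsub
    _ ≤ (Ew.erase e₀).card * 1 := card_biUnion_le_card_mul _ _ _ hblocked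
    _ < (X w).card := by omega
  obtain ⟨x, hx, hxbad⟩ := exists_mem_notMem_of_card_lt_card hlt
  exact ⟨x, hx, by_contra fun h => hxbad (mem_filter.mpr ⟨hx, h⟩)⟩

namespace IsIT

lemma empty : IsIT H (∅ : Finset V) X ∅ :=
  ⟨fun e he hsub => (card_pos.mp (two_pos.trans_le (H.inc_card e he))).ne_empty
    (subset_empty.mp hsub), by simp, by simp⟩

variable {S : Finset V}

lemma inter_eq_empty (hX : (G.verts : Set V).PairwiseDisjoint X) (hS : S ⊆ G.verts)
    (hT : IsIT H S X T) {u : V} (hu : u ∈ G.verts) (huS : u ∉ S) : T ∩ X u = ∅ := by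
  refine eq_empty_of_forall_notMem fun y hy => ?_
  obtain ⟨hyT, hyu⟩ := mem_inter.mp hy
  obtain ⟨s, hs, hys⟩ := mem_biUnion.mp (hT.2.1 hyT)
  exact disjoint_left.mp (hX (hS hs) hu (ne_of_mem_of_not_mem hs huS)) hys hyu

lemma card_inter_le_one (hX : (G.verts : Set V).PairwiseDisjoint X) (hS : S ⊆ G.verts)
    (hT : IsIT H S X T) {u : V} (hu : u ∈ G.verts) : (T ∩ X u).card ≤ 1 := by
  by_cases huS : u ∈ S
  · exact (hT.2.2 u huS).le
  · simp [hT.inter_eq_empty hX hS hu huS]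

lemma insert [DecidableEq V] (hX : (G.verts : Set V).PairwiseDisjoint X) (hS : S ⊆ G.verts)
    (hT : IsIT H S X T) {w : V} (hw : w ∈ G.verts) (hwS : w ∉ S) {x : β}
    (hx : x ∈ X w) (hxT : H.IndepSet (insert x T)) : IsIT H (insert w S) X (insert x T) := by
  refine ⟨hxT, insert_subset (mem_biUnion.mpr ⟨w, mem_insert_self w S, hx⟩)
    (hT.2.1.trans (biUnion_subset_biUnion_of_subset_left X (subset_insert w S))), ?_⟩
  intro u hu
  rcases mem_insert.mp hu with rfl | huS
  · rw [insert_inter_of_mem hx, hT.inter_eq_empty hX hS hw hwS]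
    rfl
  · have hxu : x ∉ X u :=
      disjoint_left.mp (hX hw (hS huS) (ne_of_mem_of_not_mem huS hwS).symm) hx
    rw [insert_inter_of_notMem hxu]
    exact hT.2.2 u huS

end IsIT

lemma HGraph.Connected.exists_isIT_sdiff [DecidableEq V] (hG : G.Connected)
    (hX : (G.verts : Set V).PairwiseDisjoint X) (hM : IsCoverMatching G X H M)
    (hHM : H.edges = G.edges.biUnion M) (hdeg : ∀ v ∈ G.verts, G.degree v ≤ (X v).card)
    {U : Finset V} (hU : U ⊆ G.verts) (hUne : U.Nonempty) :
    ∃ T, IsIT H (G.verts \ U) X T := by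
  obtain ⟨n, hn⟩ : ∃ n, (G.verts \ U).card = n := ⟨_, rfl⟩
  induction n generalizing U with
  | zero => exact ⟨∅, card_eq_zero.mp hn ▸ IsIT.empty⟩
  | succ n ih =>
    obtain ⟨a, ha⟩ := hUne
    obtain ⟨b, hb⟩ : (G.verts \ U).Nonempty := card_pos.mp (by omega)
    obtain ⟨u₀, hu₀U, w, hw, huw, e₀, he₀, hu₀e₀, hwe₀⟩ :=
      hG.exists_adj_of_mem_of_notMem ha (hU ha) (mem_sdiff.mp hb).1 (mem_sdiff.mp hb).2
    obtain ⟨hwV, hwU⟩ := mem_sdiff.mp hw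
    have hrest : G.verts \ insert w U = (G.verts \ U).erase w := sdiff_insert _ _ _
    obtain ⟨T, hT⟩ := ih (insert_subset hwV hU) (insert_nonempty w U)
      (by rw [hrest, card_erase_of_mem hw, hn, Nat.add_sub_cancel])
    have hS : G.verts \ insert w U ⊆ G.verts := sdiff_subset
    have hTu₀ : T ∩ X u₀ = ∅ :=
      hT.inter_eq_empty hX hS (hU hu₀U) fun h => (mem_sdiff.mp h).2 (mem_insert_of_mem hu₀U)
    obtain ⟨x, hx, hxind⟩ := hM.exists_indepSet_insert hX hHM hT.1
      (fun u hu => hT.card_inter_le_one hX hS hu) (hdeg w hwV) he₀ hwe₀ hu₀e₀ huw hTu₀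
    refine ⟨insert x T, ?_⟩
    rw [← insert_erase hw, ← hrest]
    exact hT.insert hX hS hwV (fun h => (mem_sdiff.mp h).2 (mem_insert_self w U)) hx hxind

end Greedy

theorem uncolorable_almost_transversal_general (G : HGraph α) (X : α → Finset β) (H : HGraph β)
    (hG : G.Connected) (hC : IsCover G X H)
    (hdf : ∀ v ∈ G.verts, G.degree v ≤ (X v).card) :
    ∀ v ∈ G.verts, ∃ T : Finset β, H.IndepSet T ∧
      ∀ u ∈ G.verts, u ≠ v → (T ∩ X u).card = 1 := by
  intro v hv
  obtain ⟨hX, -, -, M, hM, hHM⟩ := hC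
  obtain ⟨T, hT, -, hcard⟩ :=
    hG.exists_isIT_sdiff hX hM hHM hdf (singleton_subset_iff.mpr hv) (singleton_nonempty v)
  exact ⟨T, hT, fun u hu huv => hcard u (mem_sdiff.mpr ⟨hu, by simpa using huv⟩)⟩

/-- in an uncolorable degree-feasible configuration, for every vertex v
there is an independent set of H meeting X_u exactly once for all u ≠ v. -/
theorem uncolorable_almost_transversal (G : HGraph α) (X : α → Finset β) (H : HGraph β)
    (hG : G.Connected) (hC : IsCover G X H)
    (hdf : ∀ v ∈ G.verts, G.degree v ≤ (X v).card)
    (hunc : ¬ HasIT H G.verts X) :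
    ∀ v ∈ G.verts, ∃ T : Finset β, H.IndepSet T ∧
      ∀ u ∈ G.verts, u ≠ v → (T ∩ X u).card = 1 :=
  uncolorable_almost_transversal_general G X H hG hC hdf
end
end
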